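/- arXiv:1506.04686 — 2 statements merged into one kernel-verified Lean document; each statement's English description precedes it below -/
import Mathlib

section
/- Let G be a finite graph, r a positive integer, and F a spanning subgraph of G. If the set A₀ := {v ∈ V(G) : deg_F(v) ≥ min{r, deg_G(v)}} percolates with respect to the r-neighbour bootstrap process on G, then F is weakly (G, S_{r+1})-saturated. -/
open Finset

/-- One step of the `r`-neighbour bootstrap process on `G`: infected vertices stay infected,
and a vertex with at least `r` infected neighbours becomes infected. -/
def bootstrapStep {V : Type*} (G : SimpleGraph V) (r : ℕ) (A : Set V) : Set V :=
  A ∪ {v | r ≤ (G.neighborSet v ∩ A).ncard}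

/-- `A` percolates under the `r`-neighbour bootstrap process on `G`. -/
def Percolates {V : Type*} (G : SimpleGraph V) (r : ℕ) (A : Set V) : Prop :=
  ∃ n, (bootstrapStep G r)^[n] A = Set.univ

/-- `m(G,r)`: the minimum cardinality of a percolating set. -/
noncomputable def minPerc {V : Type*} (G : SimpleGraph V) (r : ℕ) : ℕ :=
  sInf {n | ∃ A : Set V, Percolates G r A ∧ A.ncard = n}

/-- The `d`-dimensional hypercube `Q_d`. -/
def cube (d : ℕ) : SimpleGraph (Fin d → Bool) where
  Adj x y := ∃ i, x i ≠ y i ∧ ∀ j, j ≠ i → x j = y j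
  symm := ⟨fun x y ⟨i, h1, h2⟩ => ⟨i, h1.symm, fun j hj => (h2 j hj).symm⟩⟩
  loopless := ⟨fun x ⟨i, h1, _⟩ => h1 rfl⟩

/-- The grid `∏ [a i]`. -/
def gridGraph {d : ℕ} (a : Fin d → ℕ) : SimpleGraph (∀ i, Fin (a i)) where
  Adj x y := ∃ i, (((x i : ℕ) + 1 = (y i : ℕ)) ∨ ((y i : ℕ) + 1 = (x i : ℕ))) ∧
    ∀ j, j ≠ i → x j = y j
  symm := ⟨fun x y ⟨i, h1, h2⟩ => ⟨i, h1.symm, fun j hj => (h2 j hj).symm⟩⟩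
  loopless := ⟨fun x ⟨i, h1, _⟩ => by rcases h1 with h | h <;> omega⟩

/-- The star with `n` leaves, `K_{1,n}`; vertex `0` is the centre. -/
def starGraph (n : ℕ) : SimpleGraph (Fin (n + 1)) where
  Adj x y := (x = 0 ∧ y ≠ 0) ∨ (y = 0 ∧ x ≠ 0)
  symm := ⟨fun x y h => h.symm⟩
  loopless := ⟨fun x h => by rcases h with ⟨h1, h2⟩ | ⟨h1, h2⟩ <;> exact h2 h1⟩

/-- The edge `e` completes a copy of `H` in `G'`. -/
def CompletesCopy {V W : Type*} (H : SimpleGraph W) (G' : SimpleGraph V) (e : Sym2 V) : Prop :=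
  ∃ φ : W → V, Function.Injective φ ∧ (∀ a b, H.Adj a b → G'.Adj (φ a) (φ b)) ∧
    ∃ a b, H.Adj a b ∧ e = s(φ a, φ b)

/-- `F` is weakly `(G,H)`-saturated. -/
def WeaklySaturated {V W : Type*} (G : SimpleGraph V) (H : SimpleGraph W)
    (F : SimpleGraph V) : Prop :=
  F ≤ G ∧ ∃ (n : ℕ) (e : Fin n → Sym2 V), Function.Injective e ∧
    G.edgeSet \ F.edgeSet = Set.range e ∧
    ∀ i : Fin n, CompletesCopy H
      (SimpleGraph.fromEdgeSet (F.edgeSet ∪ e '' {j | j ≤ i})) (e i)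

/-- `wsat(G,H)`: the minimum number of edges of a weakly `(G,H)`-saturated graph. -/
noncomputable def wsat {V W : Type*} (G : SimpleGraph V) (H : SimpleGraph W) : ℕ :=
  sInf {m | ∃ F : SimpleGraph V, WeaklySaturated G H F ∧ F.edgeSet.ncard = m}

/-!
Run the bootstrap process and, in round `n`, add every edge of `G` at a vertex of `A_n`. Each
such edge `wb` not yet present completes a star centred at `w`, because `w` already carries `r`
present edges other than `wb`: for `w ∈ A₀` these are edges of `F` (if `deg_F w < r`, then
`deg_F w = deg_G w` and no edge at `w` is missing), and for `w ∈ A_n \ A_{n-1}` they are the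
edges to `r` neighbours in `A_{n-1}`, added in the previous round. After percolation every edge
of `G` has been added.
-/

open SimpleGraph (fromEdgeSet fromEdgeSet_adj fromEdgeSet_mono fromEdgeSet_edgeSet)

section

variable {V W : Type*}

theorem CompletesCopy.mono {H : SimpleGraph W} {G₁ G₂ : SimpleGraph V} {e : Sym2 V}
    (h : CompletesCopy H G₁ e) (hle : G₁ ≤ G₂) : CompletesCopy H G₂ e := by
  obtain ⟨φ, hinj, hadj, a, b, hab, he⟩ := h
  exact ⟨φ, hinj, fun x y hxy => hle (hadj x y hxy), a, b, hab, he⟩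

theorem completesCopy_starGraph [Finite V] {r : ℕ} {G' : SimpleGraph V} {v u : V}
    (hvu : G'.Adj v u) (hr : r ≤ (G'.neighborSet v \ {u}).ncard) :
    CompletesCopy (starGraph (r + 1)) G' s(v, u) := by
  obtain ⟨T, hTS, hT⟩ := Set.exists_subset_card_eq hr
  let g : Fin r ↪ V := ((Finite.equivFin T).trans
    (finCongr (by rw [Nat.card_coe_set_eq, hT]))).symm.toEmbedding.trans
      (Function.Embedding.subtype _)
  have hg : ∀ i, g i ∈ G'.neighborSet v \ {u} := fun i => hTS (Subtype.prop _)
  have hleaf : ∀ b, G'.Adj v ((Fin.cons u g : Fin (r + 1) → V) b) :=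
    Fin.cases (by simpa using hvu) fun i => by simpa using (hg i).1
  refine ⟨Fin.cons v (Fin.cons u g), ?_, ?_, 0, 1, Or.inl ⟨rfl, by simp⟩, rfl⟩
  · refine Fin.cons_injective_iff.2 ⟨fun ⟨b, hb⟩ => (hleaf b).ne' hb,
      Fin.cons_injective_iff.2 ⟨fun ⟨i, hi⟩ => (hg i).2 hi, g.injective⟩⟩
  · rintro a b (⟨rfl, hb⟩ | ⟨rfl, ha⟩)
    · obtain ⟨b, rfl⟩ := Fin.exists_succ_eq.2 hb
      simpa using hleaf b
    · obtain ⟨a, rfl⟩ := Fin.exists_succ_eq.2 ha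
      simpa using (hleaf a).symm

def SaturatesTo (H : SimpleGraph W) (E E' : Set (Sym2 V)) : Prop :=
  ∃ L : List (Sym2 V), L.Nodup ∧ (∀ x ∈ L, x ∉ E) ∧ E' = E ∪ {x | x ∈ L} ∧
    ∀ i (hi : i < L.length), CompletesCopy H (fromEdgeSet (E ∪ {x | x ∈ L.take (i + 1)})) L[i]

namespace SaturatesTo

variable {H : SimpleGraph W} {E E' E'' : Set (Sym2 V)}

theorem trans (h : SaturatesTo H E E') (h' : SaturatesTo H E' E'') : SaturatesTo H E E'' := by
  obtain ⟨L, hL, hLE, rfl, hLc⟩ := h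
  obtain ⟨L', hL', hL'E, rfl, hL'c⟩ := h'
  refine ⟨L ++ L', hL.append hL' fun x hx hx' => hL'E x hx' (Or.inr hx), ?_, ?_, ?_⟩
  · simp only [List.mem_append]
    rintro x (hx | hx) hxE
    exacts [hLE x hx hxE, hL'E x hx (Or.inl hxE)]
  · ext x
    simp [or_assoc]
  · intro i hi
    rcases lt_or_ge i L.length with hiL | hiL
    · rw [List.getElem_append_left hiL, List.take_append_of_le_length hiL]
      exact hLc i hiL
    · have htake : (L ++ L').take (i + 1) = L ++ L'.take (i - L.length + 1) := by
        rw [show i + 1 = L.length + (i - L.length + 1) by omega, List.take_append,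
          List.take_of_length_le (by omega), Nat.add_sub_cancel_left]
      have hset : E ∪ {x | x ∈ L ++ L'.take (i - L.length + 1)} =
          E ∪ {x | x ∈ L} ∪ {x | x ∈ L'.take (i - L.length + 1)} := by
        ext x
        simp [or_assoc]
      rw [List.getElem_append_right hiL, htake, hset]
      exact hL'c _ (by rw [List.length_append] at hi; omega)

theorem weaklySaturated {G F : SimpleGraph V} (hFG : F ≤ G)
    (h : SaturatesTo H F.edgeSet G.edgeSet) : WeaklySaturated G H F := by
  obtain ⟨L, hL, hLF, hG, hLc⟩ := h
  refine ⟨hFG, L.length, L.get, List.nodup_iff_injective_get.1 hL, ?_, fun i => ?_⟩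
  · rw [hG, Set.union_sdiff_left, Set.range_list_get]
    exact sdiff_eq_left.2 (Set.disjoint_right.2 fun x hxF hx => hLF x hx hxF)
  · have himg : L.get '' {j | j ≤ i} = {x | x ∈ L.take (i + 1)} := by
      ext x
      simp only [Set.mem_image, Set.mem_ofPred_eq, List.mem_take_iff_getElem, lt_min_iff]
      constructor
      · rintro ⟨j, hj, rfl⟩
        exact ⟨j, ⟨Nat.lt_succ_of_le hj, j.2⟩, rfl⟩
      · rintro ⟨m, ⟨hmi, hmL⟩, rfl⟩
        exact ⟨⟨m, hmL⟩, Nat.le_of_lt_succ hmi, rfl⟩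
    rw [himg]
    exact hLc i i.2

end SaturatesTo

theorem saturatesTo_union_of_forall_completesCopy {H : SimpleGraph W} {E D : Set (Sym2 V)}
    (hD : D.Finite) (hED : Disjoint E D)
    (h : ∀ e ∈ D, CompletesCopy H (fromEdgeSet (insert e E)) e) :
    SaturatesTo H E (E ∪ D) := by
  refine ⟨hD.toFinset.toList, hD.toFinset.nodup_toList, ?_, by ext; simp, fun i hi => ?_⟩
  · intro x hx hxE
    exact hED.notMem_of_mem_left hxE (by simpa using hx)
  · have hmem : _ ∈ D := hD.mem_toFinset.1 (Finset.mem_toList.1 (List.getElem_mem hi))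
    refine (h _ hmem).mono (fromEdgeSet_mono ?_)
    exact Set.insert_subset (Or.inr (List.mem_take_iff_getElem.2 ⟨i, by omega, rfl⟩))
      Set.subset_union_left

theorem SimpleGraph.exists_adj_eq_mk_of_mem_incidenceSet {G : SimpleGraph V} {v : V}
    {e : Sym2 V} (h : e ∈ G.incidenceSet v) : ∃ w, G.Adj v w ∧ e = s(v, w) := by
  obtain ⟨he, hv⟩ := h
  rw [← Sym2.other_spec hv] at he ⊢
  exact ⟨_, he, rfl⟩

theorem saturatesTo_union_biUnion_incidenceSet [Finite V] {G : SimpleGraph V} {r : ℕ}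
    {E : Set (Sym2 V)} {B : Set V}
    (hB : ∀ w ∈ B, G.incidenceSet w ⊆ E ∨ r ≤ ((fromEdgeSet E).neighborSet w).ncard) :
    SaturatesTo (starGraph (r + 1)) E (E ∪ ⋃ w ∈ B, G.incidenceSet w) := by
  rw [← Set.union_sdiff_self]
  refine saturatesTo_union_of_forall_completesCopy (Set.toFinite _) Set.disjoint_sdiff_right ?_
  rintro e ⟨he, heE⟩
  obtain ⟨w, hwB, hw⟩ := Set.mem_iUnion₂.1 he
  obtain ⟨b, hwb, rfl⟩ := G.exists_adj_eq_mk_of_mem_incidenceSet hw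
  obtain hsub | hr := hB w hwB
  · exact absurd (hsub hw) heE
  refine completesCopy_starGraph ((fromEdgeSet_adj _).2 ⟨Set.mem_insert _ _, hwb.ne⟩)
    (hr.trans (Set.ncard_le_ncard fun x hx => ?_))
  refine ⟨fromEdgeSet_mono (Set.subset_insert _ _) hx, ?_⟩
  rintro rfl
  exact heE ((fromEdgeSet_adj _).1 hx).1

theorem saturatesTo_iterate_bootstrapStep [Finite V] {G F : SimpleGraph V} (hFG : F ≤ G)
    (r n : ℕ) :
    SaturatesTo (starGraph (r + 1)) F.edgeSet (F.edgeSet ∪ ⋃ w ∈ (bootstrapStep G r)^[n]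
      {v | min r (G.neighborSet v).ncard ≤ (F.neighborSet v).ncard}, G.incidenceSet w) := by
  induction n with
  | zero =>
    refine saturatesTo_union_biUnion_incidenceSet fun w hw => ?_
    rw [fromEdgeSet_edgeSet]
    rcases le_total r (G.neighborSet w).ncard with hr | hr
    · exact Or.inr ((min_eq_left hr).symm.trans_le hw)
    · have hFw : F.neighborSet w = G.neighborSet w :=
        Set.eq_of_subset_of_ncard_le (fun u hu => hFG hu) ((min_eq_right hr).symm.trans_le hw)
      refine Or.inl fun e he => ?_
      obtain ⟨b, hwb, rfl⟩ := G.exists_adj_eq_mk_of_mem_incidenceSet he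
      exact (show b ∈ F.neighborSet w from hFw ▸ hwb)
  | succ n ih =>
    set A := (bootstrapStep G r)^[n]
      {v | min r (G.neighborSet v).ncard ≤ (F.neighborSet v).ncard}
    have hA : A ⊆ bootstrapStep G r A := Set.subset_union_left
    refine ih.trans ?_
    convert saturatesTo_union_biUnion_incidenceSet (B := bootstrapStep G r A) ?_ using 1
    · rw [Function.iterate_succ_apply', Set.union_assoc,
        Set.union_eq_right.2 (Set.biUnion_subset_biUnion_left hA)]
    rintro w (hw | hw)
    · exact Or.inl (Set.subset_union_right.trans' (Set.subset_biUnion_of_mem hw))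
    refine Or.inr (hw.trans (Set.ncard_le_ncard ?_))
    rintro x ⟨hwx, hxA⟩
    exact (fromEdgeSet_adj _).2
      ⟨Or.inr (Set.mem_biUnion hxA (G.mk'_mem_incidenceSet_right_iff.2 hwx)), hwx.ne⟩

end

theorem stmt6_general {V : Type*} [Fintype V] (G F : SimpleGraph V) (r : ℕ)
    (hFG : F ≤ G)
    (hperc : Percolates G r
      {v | min r (G.neighborSet v).ncard ≤ (F.neighborSet v).ncard}) :
    WeaklySaturated G (starGraph (r + 1)) F := by
  obtain ⟨n, hn⟩ := hperc
  have h := saturatesTo_iterate_bootstrapStep hFG r n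
  rw [hn, Set.biUnion_univ, G.iUnion_incidenceSet,
    Set.union_eq_right.2 (SimpleGraph.edgeSet_mono hFG)] at h
  exact h.weaklySaturated hFG

/-- If the set of vertices `v` with `deg_F(v) ≥ min(r, deg_G(v))`
percolates for the `r`-neighbour bootstrap process on `G`, then `F` is weakly
`(G, S_{r+1})`-saturated. -/
theorem stmt6 {V : Type*} [Fintype V] (G F : SimpleGraph V) (r : ℕ) (hr : 1 ≤ r)
    (hFG : F ≤ G)
    (hperc : Percolates G r
      {v | min r (G.neighborSet v).ncard ≤ (F.neighborSet v).ncard}) :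
    WeaklySaturated G (starGraph (r + 1)) F :=
  stmt6_general G F r hFG hperc
end

section
/- For all integers d ≥ 1 and a_1, …, a_d ≥ 2, the minimum cardinality of a percolating set for the 2-neighbour bootstrap process on the grid ∏_{i=1}^d [a_i] satisfies m(∏_{i=1}^d [a_i], 2) ≥ ⌈(Σ_{i=1}^d (a_i − 1))/2⌉ + 1. -/
open Finset

/-!
Cover the infected set by axis-parallel boxes `[lo, hi]` of `ℕ^d` and give a box the weight
`∑ i, (hi i - lo i) + 2`, so that a single vertex weighs `2`. A vertex infected by two distinct
neighbours either already lies in the box containing both of them, or it joins the two boxes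
containing them into their bounding box, which weighs at most as much as the two boxes together.
So the total weight of a cover never grows along the process, and starting from the singletons
of the initial set `A` it stays at most `2 |A|`. On the other hand the coordinate sum of a point
of a box `[lo, hi]` takes at most `∑ i, (hi i - lo i) + 1` values, while on the whole grid it
takes all `∑ i, (a i - 1) + 1` values, so a cover of the grid weighs at least
`∑ i, (a i - 1) + 2`.
-/

section Boxes

variable {ι : Type*} [Fintype ι]

/-- A pair `B = (lo, hi)` stands for the box `Set.Icc lo hi`. -/
def boxSize (B : (ι → ℕ) × (ι → ℕ)) : ℕ := ∑ i, (B.2 i - B.1 i)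

lemma boxSize_hull_le {B₁ B₂ : (ι → ℕ) × (ι → ℕ)} {u w : ι → ℕ} (hu : u ∈ Set.Icc B₁.1 B₁.2)
    (hw : w ∈ Set.Icc B₂.1 B₂.2) (v : ι → ℕ) :
    boxSize (B₁.1 ⊓ B₂.1 ⊓ v, B₁.2 ⊔ B₂.2 ⊔ v) ≤
      boxSize B₁ + boxSize B₂ + ∑ i, Nat.dist (v i) (u i) + ∑ i, Nat.dist (v i) (w i) := by
  have hull_le (l₁ h₁ l₂ h₂ u w v : ℕ) (h1 : l₁ ≤ u) (h2 : u ≤ h₁) (h3 : l₂ ≤ w) (h4 : w ≤ h₂) :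
      max (max h₁ h₂) v - min (min l₁ l₂) v ≤
        h₁ - l₁ + (h₂ - l₂) + Nat.dist v u + Nat.dist v w := by
    unfold Nat.dist; omega
  simp only [boxSize, ← Finset.sum_add_distrib]
  exact Finset.sum_le_sum fun i _ => hull_le _ _ _ _ _ _ _ (hu.1 i) (hu.2 i) (hw.1 i) (hw.2 i)

lemma card_Icc_sum_le_boxSize_add_one (B : (ι → ℕ) × (ι → ℕ)) :
    (Finset.Icc (∑ i, B.1 i) (∑ i, B.2 i)).card ≤ boxSize B + 1 := by
  have : ∑ i, B.2 i ≤ ∑ i, B.1 i + boxSize B := by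
    rw [boxSize, ← Finset.sum_add_distrib]
    exact Finset.sum_le_sum fun i _ => by omega
  rw [Nat.card_Icc]
  omega

end Boxes

section Grid

variable {d : ℕ} {a : Fin d → ℕ}

def gridCoords (x : ∀ i, Fin (a i)) : Fin d → ℕ := fun i => x i

lemma gridGraph_adj_sum_dist {x y : ∀ i, Fin (a i)} (h : (gridGraph a).Adj x y) :
    ∑ i, Nat.dist (x i) (y i) = 1 := by
  obtain ⟨i, hi, hother⟩ := h
  rw [Finset.sum_eq_single i (fun j _ hj => by simp [hother j hj]) (by simp)]
  unfold Nat.dist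
  omega

lemma gridCoords_mem_Icc_of_adj {u v w : ∀ i, Fin (a i)} (hvu : (gridGraph a).Adj v u)
    (hvw : (gridGraph a).Adj v w) (huw : u ≠ w) :
    gridCoords u ⊓ gridCoords w ≤ gridCoords v ∧ gridCoords v ≤ gridCoords u ⊔ gridCoords w := by
  obtain ⟨i, hi, hu⟩ := hvu
  obtain ⟨j, hj, hw⟩ := hvw
  have hbetween : ∀ k, min (u k : ℕ) (w k) ≤ v k ∧ (v k : ℕ) ≤ max (u k : ℕ) (w k) := by
    intro k
    by_cases hki : k = i
    · by_cases hkj : k = j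
      · subst hki hkj
        have hne : (u k : ℕ) ≠ w k := fun h => huw <| funext fun l => by
          by_cases hl : l = k
          · exact hl ▸ Fin.ext h
          · rw [← hu l hl, ← hw l hl]
        omega
      · rw [hw k hkj]; omega
    · rw [hu k hki]; omega
  exact ⟨fun k => (hbetween k).1, fun k => (hbetween k).2⟩

lemma exists_sum_gridCoords_eq (ha : ∀ i, 0 < a i) {t : ℕ} (ht : t ≤ ∑ i, (a i - 1)) :
    ∃ x : ∀ i, Fin (a i), ∑ i, gridCoords x i = t := by
  induction t with
  | zero => exact ⟨fun i => ⟨0, ha i⟩, by simp [gridCoords]⟩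
  | succ t ih =>
    obtain ⟨x, hx⟩ := ih (by omega)
    obtain ⟨i, -, hi⟩ : ∃ i ∈ Finset.univ, (x i : ℕ) < a i - 1 := by
      by_contra! hmax
      have : ∑ i, (a i - 1) ≤ ∑ i, gridCoords x i := Finset.sum_le_sum hmax
      omega
    refine ⟨Function.update x i ⟨x i + 1, by omega⟩, ?_⟩
    rw [← Finset.add_sum_erase _ _ (Finset.mem_univ i), ← hx,
      ← Finset.add_sum_erase _ _ (Finset.mem_univ i)]
    simp only [gridCoords, Function.update_self]
    rw [Finset.sum_congr rfl fun j hj => by rw [Function.update_of_ne (Finset.ne_of_mem_erase hj)]]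
    omega

end Grid

section BoxCover

variable {d : ℕ} {a : Fin d → ℕ}

def IsBoxCover (C : Finset ((Fin d → ℕ) × (Fin d → ℕ))) (A : Set (∀ i, Fin (a i))) : Prop :=
  ∀ x ∈ A, ∃ B ∈ C, gridCoords x ∈ Set.Icc B.1 B.2

def coverWeight (C : Finset ((Fin d → ℕ) × (Fin d → ℕ))) : ℕ := ∑ B ∈ C, (boxSize B + 2)

lemma exists_isBoxCover_coverWeight_le (A : Set (∀ i, Fin (a i))) :
    ∃ C : Finset ((Fin d → ℕ) × (Fin d → ℕ)), IsBoxCover C A ∧ coverWeight C ≤ 2 * A.ncard := by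
  classical
  refine ⟨(Set.toFinite A).toFinset.image fun x => (gridCoords x, gridCoords x), ?_, ?_⟩
  · exact fun x hx => ⟨_, Finset.mem_image_of_mem _ ((Set.Finite.mem_toFinset _).2 hx),
      le_rfl, le_rfl⟩
  · calc coverWeight _
        ≤ ∑ x ∈ (Set.toFinite A).toFinset, (boxSize (gridCoords x, gridCoords x) + 2) :=
          Finset.sum_image_le_of_nonneg fun _ _ => Nat.zero_le _
      _ = 2 * A.ncard := by simp [boxSize, Set.ncard_eq_toFinset_card A, mul_comm]

variable {C : Finset ((Fin d → ℕ) × (Fin d → ℕ))} {T : Set (∀ i, Fin (a i))}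

lemma IsBoxCover.exists_insert (hC : IsBoxCover C T) {u v w : ∀ i, Fin (a i)} (hu : u ∈ T)
    (hw : w ∈ T) (huw : u ≠ w) (hvu : (gridGraph a).Adj v u) (hvw : (gridGraph a).Adj v w) :
    ∃ C', IsBoxCover C' (insert v T) ∧ coverWeight C' ≤ coverWeight C := by
  classical
  by_cases hv : ∃ B ∈ C, gridCoords v ∈ Set.Icc B.1 B.2
  · exact ⟨C, fun x hx => hx.elim (fun h => h ▸ hv) (hC x), le_rfl⟩
  obtain ⟨B₁, hB₁, hu₁⟩ := hC u hu
  obtain ⟨B₂, hB₂, hw₂⟩ := hC w hw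
  have hB₁₂ : B₁ ≠ B₂ := by
    rintro rfl
    obtain ⟨hlo, hhi⟩ := gridCoords_mem_Icc_of_adj hvu hvw huw
    exact hv ⟨B₁, hB₁, (le_inf hu₁.1 hw₂.1).trans hlo, hhi.trans (sup_le hu₁.2 hw₂.2)⟩
  set H := (B₁.1 ⊓ B₂.1 ⊓ gridCoords v, B₁.2 ⊔ B₂.2 ⊔ gridCoords v)
  have hvH : gridCoords v ∈ Set.Icc H.1 H.2 := ⟨inf_le_right, le_sup_right⟩
  have hHC : H ∉ C := fun h => hv ⟨H, h, hvH⟩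
  refine ⟨insert H ((C.erase B₁).erase B₂), ?_, ?_⟩
  · rintro x (rfl | hx)
    · exact ⟨H, Finset.mem_insert_self _ _, hvH⟩
    obtain ⟨B, hB, hxB⟩ := hC x hx
    by_cases h₁ : B = B₁
    · subst h₁
      exact ⟨H, Finset.mem_insert_self _ _,
        Set.Icc_subset_Icc (inf_le_left.trans inf_le_left) (le_sup_left.trans le_sup_left) hxB⟩
    by_cases h₂ : B = B₂
    · subst h₂
      exact ⟨H, Finset.mem_insert_self _ _,
        Set.Icc_subset_Icc (inf_le_left.trans inf_le_right) (le_sup_right.trans le_sup_left) hxB⟩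
    exact ⟨B, Finset.mem_insert_of_mem (by simp [hB, h₁, h₂]), hxB⟩
  · have hsize : boxSize H ≤ boxSize B₁ + boxSize B₂ + 1 + 1 := by
      simpa only [gridCoords, gridGraph_adj_sum_dist hvu, gridGraph_adj_sum_dist hvw] using
        boxSize_hull_le hu₁ hw₂ (gridCoords v)
    have hsplit : coverWeight C =
        (boxSize B₁ + 2) + (boxSize B₂ + 2) + coverWeight ((C.erase B₁).erase B₂) := by
      rw [coverWeight, coverWeight, add_assoc,
        Finset.add_sum_erase _ (fun B => boxSize B + 2) (Finset.mem_erase.2 ⟨hB₁₂.symm, hB₂⟩),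
        Finset.add_sum_erase _ (fun B => boxSize B + 2) hB₁]
    rw [coverWeight, Finset.sum_insert fun h => hHC (Finset.mem_of_mem_erase
      (Finset.mem_of_mem_erase h)), ← coverWeight, hsplit]
    omega

lemma IsBoxCover.exists_union (hC : IsBoxCover C T) (s : Set (∀ i, Fin (a i)))
    (hs : ∀ v ∈ s, 2 ≤ ((gridGraph a).neighborSet v ∩ T).ncard) :
    ∃ C', IsBoxCover C' (T ∪ s) ∧ coverWeight C' ≤ coverWeight C := by
  induction s, s.toFinite using Set.Finite.induction_on_subset with
  | empty => exact ⟨C, by simpa using hC, le_rfl⟩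
  | @insert v s _ _ _ ih =>
    obtain ⟨C', hC', hweight⟩ := ih fun x hx => hs x (Set.mem_insert_of_mem _ hx)
    obtain ⟨u, ⟨hvu, hu⟩, w, ⟨hvw, hw⟩, huw⟩ :=
      (Set.one_lt_ncard (Set.toFinite _)).1 (hs v (Set.mem_insert v s))
    obtain ⟨C'', hC'', hweight'⟩ :=
      hC'.exists_insert (Or.inl hu) (Or.inl hw) huw hvu hvw
    exact ⟨C'', by simpa only [Set.union_insert] using hC'', hweight'.trans hweight⟩

lemma IsBoxCover.exists_iterate_bootstrapStep (hC : IsBoxCover C T) (n : ℕ) :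
    ∃ C', IsBoxCover C' ((bootstrapStep (gridGraph a) 2)^[n] T) ∧
      coverWeight C' ≤ coverWeight C := by
  induction n generalizing C T with
  | zero => exact ⟨C, hC, le_rfl⟩
  | succ n ih =>
    obtain ⟨C', hC', hweight⟩ := hC.exists_union _ fun _ hv => hv
    obtain ⟨C'', hC'', hweight'⟩ := ih hC'
    exact ⟨C'', hC'', hweight'.trans hweight⟩

lemma IsBoxCover.add_two_le_coverWeight (ha : ∀ i, 0 < a i)
    (hC : IsBoxCover C (Set.univ : Set (∀ i, Fin (a i)))) :
    ∑ i, (a i - 1) + 2 ≤ coverWeight C := by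
  classical
  have hcover : Finset.range (∑ i, (a i - 1) + 1) ⊆
      C.biUnion fun B => Finset.Icc (∑ i, B.1 i) (∑ i, B.2 i) := by
    intro t ht
    obtain ⟨x, hx⟩ := exists_sum_gridCoords_eq ha (Nat.lt_succ_iff.1 (Finset.mem_range.1 ht))
    obtain ⟨B, hB, hxB⟩ := hC x trivial
    exact Finset.mem_biUnion.2 ⟨B, hB, Finset.mem_Icc.2
      ⟨hx ▸ Finset.sum_le_sum fun i _ => hxB.1 i, hx ▸ Finset.sum_le_sum fun i _ => hxB.2 i⟩⟩
  have hcount : ∑ i, (a i - 1) + 1 ≤ ∑ B ∈ C, (boxSize B + 1) := calc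
    _ = (Finset.range (∑ i, (a i - 1) + 1)).card := (Finset.card_range _).symm
    _ ≤ _ := Finset.card_le_card hcover
    _ ≤ ∑ B ∈ C, (Finset.Icc (∑ i, B.1 i) (∑ i, B.2 i)).card := Finset.card_biUnion_le
    _ ≤ _ := Finset.sum_le_sum fun B _ => card_Icc_sum_le_boxSize_add_one B
  have hC₀ : C.Nonempty := Finset.nonempty_iff_ne_empty.2 fun h => by simp [h] at hcount
  have hweight : coverWeight C = ∑ B ∈ C, (boxSize B + 1) + C.card := by
    simp only [coverWeight, Finset.card_eq_sum_ones, ← Finset.sum_add_distrib]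
  have := hC₀.card_pos
  omega

lemma Percolates.sum_add_two_le_two_mul_ncard (ha : ∀ i, 0 < a i) {A : Set (∀ i, Fin (a i))}
    (hA : Percolates (gridGraph a) 2 A) : ∑ i, (a i - 1) + 2 ≤ 2 * A.ncard := by
  obtain ⟨n, hn⟩ := hA
  obtain ⟨C, hC, hweight⟩ := exists_isBoxCover_coverWeight_le A
  obtain ⟨C', hC', hweight'⟩ := hC.exists_iterate_bootstrapStep n
  rw [hn] at hC'
  exact (hC'.add_two_le_coverWeight ha).trans (hweight'.trans hweight)

end BoxCover

lemma exists_percolates_ncard_eq_minPerc {V : Type*} (G : SimpleGraph V) (r : ℕ) :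
    ∃ A, Percolates G r A ∧ A.ncard = minPerc G r :=
  Nat.sInf_mem (s := {n | ∃ A : Set V, Percolates G r A ∧ A.ncard = n}) ⟨_, Set.univ, ⟨0, rfl⟩, rfl⟩

theorem stmt14_general (d : ℕ) (a : Fin d → ℕ) (ha : ∀ i, 2 ≤ a i) :
    (⌈(∑ i, ((a i : ℚ) - 1)) / 2⌉ + 1 : ℤ) ≤ (minPerc (gridGraph a) 2 : ℤ) := by
  obtain ⟨A, hA, hcard⟩ := exists_percolates_ncard_eq_minPerc (gridGraph a) 2
  have hbound : ((∑ i, (a i - 1) : ℕ) : ℚ) + 2 ≤ 2 * A.ncard := by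
    exact_mod_cast hA.sum_add_two_le_two_mul_ncard fun i => (ha i).trans_lt' two_pos
  have hsum : ∑ i, ((a i : ℚ) - 1) = ((∑ i, (a i - 1) : ℕ) : ℚ) := by
    push_cast [Nat.cast_sub (one_le_two.trans (ha _))]
    rfl
  have hceil : ⌈(∑ i, ((a i : ℚ) - 1)) / 2⌉ ≤ (A.ncard : ℤ) - 1 := by
    rw [Int.ceil_le, hsum, div_le_iff₀ two_pos, Int.cast_sub, Int.cast_natCast, Int.cast_one]
    linarith
  omega

/-- `m(∏ [a i], 2) ≥ ⌈(∑ (a i - 1))/2⌉ + 1`. -/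
theorem stmt14 (d : ℕ) (hd : 1 ≤ d) (a : Fin d → ℕ) (ha : ∀ i, 2 ≤ a i) :
    (⌈(∑ i, ((a i : ℚ) - 1)) / 2⌉ + 1 : ℤ) ≤ (minPerc (gridGraph a) 2 : ℤ) :=
  stmt14_general d a ha
end
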